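/- Let 0 < λ < 1 and 0 < k < 1 satisfy 1−k² < (1−λ²)/λ², and let N ≥ 0 be an integer. Define the remainder R_{1,N}(λ,k) = F(λ,k) − (1/2)·ln((1+λ)/(1−λ))·Σ_{j=0}^N ((1/2)_j)²/(j!)²·(1−k²)^j − (1/(2λ))·Σ_{j=1}^N Σ_{n=0}^{j−1} (−1)^{j+n}·((1/2)_j (1/2−j)_n)/(j·j!·(1−j)_n)·(1−k²)^j·(λ²/(1−λ²))^{j−n}. Then |R_{1,N}(λ,k)| ≤ (λ·(1/2)_{N+1})/(2(N+1)·(N+1)!) · [λ²(1−k²)/(1−λ²)]^{N+1}. -/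

import Mathlib

/-!
Since `1 - k²t² = (1 - t²)(1 + x)` with `x = (1 - k²)t²/(1 - t²) ≥ 0`, the integrand of `F` is
`(1 - t²)⁻¹ (1 + x)^(-1/2)`. For `α ≥ 0` the Taylor remainder of `(1 + x)^(-α)` after `n` terms
is bounded by the first omitted term, by induction on `n`: its derivative is `-α` times the
remainder of `(1 + x)^(-(α + 1))` after `n - 1` terms. Integrating the polynomial part term by term
leaves the integrals `∫₀^λ t^(2j)/(1 - t²)^(j+1)`; differentiating `t^(2j+1)/(1 - t²)^(j+1)` gives
a two-term recurrence for them, whose solution produces the logarithmic sum and the double sum.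
The remainder is at most a constant times `t^(2N+2)/(1 - t²)^(N+2) ≤ λ t^(2N+1)/(1 - t²)^(N+2)`,
and the latter is an exact derivative.
-/

open Real Finset

/-- Pochhammer symbol `(a)_n = a (a+1) ⋯ (a+n-1)`. -/
noncomputable def poch (a : ℝ) (n : ℕ) : ℝ := ∏ i ∈ Finset.range n, (a + i)

open scoped Nat

section Pochhammer

lemma poch_zero (a : ℝ) : poch a 0 = 1 := prod_range_zero _

lemma poch_succ_right (a : ℝ) (n : ℕ) : poch a (n + 1) = poch a n * (a + n) :=
  prod_range_succ _ _

lemma poch_succ_left (a : ℝ) (n : ℕ) : poch a (n + 1) = a * poch (a + 1) n := by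
  rw [poch, prod_range_succ', poch]
  simp only [Nat.cast_add, Nat.cast_one, Nat.cast_zero, add_zero, mul_comm a]
  congr 1
  exact prod_congr rfl fun i _ => by ring

lemma poch_nonneg {a : ℝ} (ha : 0 ≤ a) (n : ℕ) : 0 ≤ poch a n :=
  prod_nonneg fun i _ => by positivity

end Pochhammer

section NegBinomial

noncomputable def negBinomCoeff (α : ℝ) (j : ℕ) : ℝ := (-1) ^ j * poch α j / j !

lemma succ_mul_negBinomCoeff_succ (α : ℝ) (j : ℕ) :
    (j + 1) * negBinomCoeff α (j + 1) = -α * negBinomCoeff (α + 1) j := by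
  rw [negBinomCoeff, negBinomCoeff, poch_succ_left, Nat.factorial_succ, pow_succ]
  push_cast
  field_simp

lemma succ_mul_negBinomCoeff_succ_add (α : ℝ) (j : ℕ) :
    (j + 1) * negBinomCoeff α (j + 1) + (α + j) * negBinomCoeff α j = 0 := by
  rw [negBinomCoeff, negBinomCoeff, poch_succ_right, Nat.factorial_succ, pow_succ]
  push_cast
  field_simp
  ring

lemma hasDerivAt_sum_negBinomCoeff_mul_pow (α : ℝ) (n : ℕ) (x : ℝ) :
    HasDerivAt (fun x => ∑ j ∈ range (n + 1), negBinomCoeff α j * x ^ j)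
      (-α * ∑ j ∈ range n, negBinomCoeff (α + 1) j * x ^ j) x := by
  have h := HasDerivAt.fun_sum (u := range (n + 1)) fun j _ =>
    (hasDerivAt_pow j x).const_mul (negBinomCoeff α j)
  refine h.congr_deriv ?_
  rw [sum_range_succ', mul_sum]
  simp only [CharP.cast_eq_zero, zero_mul, mul_zero, add_zero, Nat.cast_add,
    Nat.cast_one, add_tsub_cancel_right]
  refine sum_congr rfl fun j _ => ?_
  rw [← mul_assoc, mul_comm _ (_ + 1 : ℝ), succ_mul_negBinomCoeff_succ, mul_assoc]

theorem abs_one_add_rpow_neg_sub_sum_le {α : ℝ} (hα : 0 ≤ α) (n : ℕ) {x : ℝ} (hx : 0 ≤ x) :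
    |(1 + x) ^ (-α) - ∑ j ∈ range n, negBinomCoeff α j * x ^ j| ≤ poch α n / n ! * x ^ n := by
  induction n generalizing α x with
  | zero =>
    simp only [range_zero, sum_empty, sub_zero, poch_zero, Nat.factorial_zero, Nat.cast_one,
      div_one, pow_zero, mul_one]
    rw [abs_of_nonneg (by positivity)]
    exact rpow_le_one_of_one_le_of_nonpos (by linarith) (by linarith)
  | succ n ih =>
    have hderiv : ∀ s, 0 ≤ s → HasDerivAt
        (fun s => (1 + s) ^ (-α) - ∑ j ∈ range (n + 1), negBinomCoeff α j * s ^ j)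
        (-α * ((1 + s) ^ (-(α + 1)) - ∑ j ∈ range n, negBinomCoeff (α + 1) j * s ^ j)) s := by
      intro s hs
      have hpow := ((hasDerivAt_id s).const_add 1).rpow_const (p := -α)
        (Or.inl (by simp; linarith))
      refine (hpow.sub (hasDerivAt_sum_negBinomCoeff_mul_pow α n s)).congr_deriv ?_
      simp only [id, neg_add, one_mul, sub_eq_add_neg]
      ring
    have hB : ∀ s, HasDerivAt (fun s => poch α (n + 1) / (n + 1)! * s ^ (n + 1))
        (α * (poch (α + 1) n / n ! * s ^ n)) s := by
      intro s
      refine ((hasDerivAt_pow (n + 1) s).const_mul (poch α (n + 1) / (n + 1)!)).congr_deriv ?_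
      rw [poch_succ_left, Nat.factorial_succ]
      push_cast
      field_simp
    refine image_norm_le_of_norm_deriv_right_le_deriv_boundary (a := 0) (b := x)
      (fun s hs => (hderiv s hs.1).continuousAt.continuousWithinAt)
      (fun s hs => (hderiv s hs.1).hasDerivWithinAt) ?_ hB ?_ ⟨hx, le_rfl⟩
    · simp [sum_range_succ', negBinomCoeff, poch_zero]
    · intro s hs
      rw [Real.norm_eq_abs, abs_mul, abs_neg, abs_of_nonneg hα]
      exact mul_le_mul_of_nonneg_left (ih (by linarith) hs.1) hα

end NegBinomial

section Integrals

variable {l : ℝ}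

lemma one_sub_sq_pos_of_mem_uIcc {t : ℝ} (hl : |l| < 1) (ht : t ∈ Set.uIcc 0 l) :
    0 < 1 - t ^ 2 := by
  have := Set.abs_sub_left_of_mem_uIcc ht
  rw [sub_zero, sub_zero] at this
  rw [sub_pos, sq_lt_one_iff_abs_lt_one]
  linarith

lemma continuousOn_pow_div_one_sub_sq_pow (hl : |l| < 1) (p q : ℕ) :
    ContinuousOn (fun t : ℝ => t ^ p / (1 - t ^ 2) ^ q) (Set.uIcc 0 l) :=
  (continuous_pow p).continuousOn.div (by fun_prop) fun _ ht =>
    pow_ne_zero _ (one_sub_sq_pos_of_mem_uIcc hl ht).ne'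

lemma hasDerivAt_pow_succ_div_one_sub_sq_pow (p q : ℕ) {t : ℝ} (ht : 1 - t ^ 2 ≠ 0) :
    HasDerivAt (fun s : ℝ => s ^ (p + 1) / (1 - s ^ 2) ^ q)
      (((p + 1) * t ^ p * (1 - t ^ 2) + 2 * q * t ^ (p + 2)) / (1 - t ^ 2) ^ (q + 1)) t := by
  have hden := ((hasDerivAt_pow 2 t).const_sub 1).fun_pow q
  refine ((hasDerivAt_pow (p + 1) t).div hden (pow_ne_zero q ht)).congr_deriv ?_
  rcases q with _ | q
  · simp [field]
  · push_cast
    field_simp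
    ring

lemma integral_one_div_one_sub_sq (hl : |l| < 1) :
    ∫ t in (0 : ℝ)..l, 1 / (1 - t ^ 2) = 1 / 2 * log ((1 + l) / (1 - l)) := by
  have hderiv : ∀ t ∈ Set.uIcc 0 l, HasDerivAt (fun s => 1 / 2 * (log (1 + s) - log (1 - s)))
      (1 / (1 - t ^ 2)) t := by
    intro t ht
    have h := one_sub_sq_pos_of_mem_uIcc hl ht
    have h1 : 0 < 1 + t := by nlinarith
    have h2 : 0 < 1 - t := by nlinarith
    have hlog := (((hasDerivAt_id t).const_add 1).log h1.ne').sub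
      (((hasDerivAt_id t).const_sub 1).log h2.ne')
    refine (hlog.const_mul (1 / 2)).congr_deriv ?_
    simp only [id]
    field_simp
    ring
  have hl1 : 0 < 1 + l := by linarith [neg_abs_le l]
  have hl2 : 0 < 1 - l := by linarith [le_abs_self l]
  rw [intervalIntegral.integral_eq_sub_of_hasDerivAt hderiv
    ((continuousOn_pow_div_one_sub_sq_pow hl 0 1).congr (fun t _ => by simp)).intervalIntegrable,
    log_div hl1.ne' hl2.ne']
  simp

lemma integral_pow_div_one_sub_sq_pow_recurrence (hl : |l| < 1) (j : ℕ) :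
    (2 * j + 2) * (∫ t in (0 : ℝ)..l, t ^ (2 * (j + 1)) / (1 - t ^ 2) ^ (j + 1 + 1))
      + (2 * j + 1) * ∫ t in (0 : ℝ)..l, t ^ (2 * j) / (1 - t ^ 2) ^ (j + 1)
      = l ^ (2 * j + 1) / (1 - l ^ 2) ^ (j + 1) := by
  rw [← intervalIntegral.integral_const_mul, ← intervalIntegral.integral_const_mul,
    ← intervalIntegral.integral_add
      ((continuousOn_pow_div_one_sub_sq_pow hl _ _).intervalIntegrable.const_mul _)
      ((continuousOn_pow_div_one_sub_sq_pow hl _ _).intervalIntegrable.const_mul _),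
    intervalIntegral.integral_eq_sub_of_hasDerivAt
      (f := fun s => s ^ (2 * j + 1) / (1 - s ^ 2) ^ (j + 1))]
  · simp
  · intro t ht
    have h := (one_sub_sq_pos_of_mem_uIcc hl ht).ne'
    refine (hasDerivAt_pow_succ_div_one_sub_sq_pow (2 * j) (j + 1) h).congr_deriv ?_
    push_cast
    field_simp
    ring
  · exact ((continuousOn_pow_div_one_sub_sq_pow hl _ _).intervalIntegrable.const_mul _).add
      ((continuousOn_pow_div_one_sub_sq_pow hl _ _).intervalIntegrable.const_mul _)

lemma integral_odd_pow_div_one_sub_sq_pow (hl : |l| < 1) (m : ℕ) :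
    ∫ t in (0 : ℝ)..l, t ^ (2 * m + 1) / (1 - t ^ 2) ^ (m + 2)
      = l ^ (2 * m + 2) / ((2 * m + 2) * (1 - l ^ 2) ^ (m + 1)) := by
  rw [intervalIntegral.integral_eq_sub_of_hasDerivAt
    (f := fun s => s ^ (2 * m + 2) / (1 - s ^ 2) ^ (m + 1) / (2 * m + 2))]
  · field_simp
    simp
  · intro t ht
    have h := (one_sub_sq_pos_of_mem_uIcc hl ht).ne'
    refine ((hasDerivAt_pow_succ_div_one_sub_sq_pow (2 * m + 1) (m + 1) h).div_const
      _).congr_deriv ?_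
    push_cast
    field_simp
    ring
  · exact (continuousOn_pow_div_one_sub_sq_pow hl _ _).intervalIntegrable

end Integrals

section Moments

noncomputable def momentRationalPart (r : ℝ) (j : ℕ) : ℝ :=
  ∑ n ∈ range j, (-1) ^ n * poch (1 / 2 - j) n / (j * poch (1 - j) n) * r ^ (j - n)

lemma momentRationalPart_recurrence (r : ℝ) (j : ℕ) :
    (2 * j + 2) * momentRationalPart r (j + 1) + (2 * j + 1) * momentRationalPart r j
      = 2 * r ^ (j + 1) := by
  have hterm : ∀ n,
      (2 * j + 2) * ((-1) ^ (n + 1) * poch (1 / 2 - ↑(j + 1)) (n + 1)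
          / (↑(j + 1) * poch (1 - ↑(j + 1)) (n + 1)) * r ^ (j + 1 - (n + 1)))
        = -(2 * j + 1) * ((-1) ^ n * poch (1 / 2 - j) n / (j * poch (1 - j) n) * r ^ (j - n)) := by
    intro n
    rw [poch_succ_left, poch_succ_left, Nat.add_sub_add_right]
    push_cast
    rw [show (1 / 2 - (j + 1) + 1 : ℝ) = 1 / 2 - j by ring,
      show (1 - (j + 1) + 1 : ℝ) = 1 - j by ring,
      show (1 / 2 - (j + 1) : ℝ) = -(2 * j + 1) / 2 by ring,
      show (1 - (j + 1) : ℝ) = -j by ring, pow_succ]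
    field_simp
  rw [momentRationalPart, momentRationalPart, sum_range_succ', mul_add, mul_sum,
    sum_congr rfl fun n _ => hterm n, ← mul_sum]
  simp only [one_div, pow_zero, Nat.cast_add, Nat.cast_one, poch_zero, mul_one,
    sub_add_cancel_right, tsub_zero]
  field_simp
  ring

theorem integral_pow_div_one_sub_sq_pow {l : ℝ} (hl : |l| < 1) (j : ℕ) :
    ∫ t in (0 : ℝ)..l, t ^ (2 * j) / (1 - t ^ 2) ^ (j + 1)
      = negBinomCoeff (1 / 2) j * (1 / 2 * log ((1 + l) / (1 - l)))
        + 1 / (2 * l) * momentRationalPart (l ^ 2 / (1 - l ^ 2)) j := by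
  induction j with
  | zero =>
    simpa [negBinomCoeff, poch_zero, momentRationalPart] using integral_one_div_one_sub_sq hl
  | succ j ih =>
    have hrec := integral_pow_div_one_sub_sq_pow_recurrence hl j
    have hcoeff := succ_mul_negBinomCoeff_succ_add (1 / 2) j
    have hrat := momentRationalPart_recurrence (l ^ 2 / (1 - l ^ 2)) j
    have hpow : 1 / (2 * l) * (2 * (l ^ 2 / (1 - l ^ 2)) ^ (j + 1))
        = l ^ (2 * j + 1) / (1 - l ^ 2) ^ (j + 1) := by
      -- at `l = 0` both sides vanish, the left one because `1 / (2 * 0) = 0`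
      rcases eq_or_ne l 0 with rfl | hl0
      · simp
      · have : 1 - l ^ 2 ≠ 0 := by
          have := (sq_lt_one_iff_abs_lt_one l).2 hl
          linarith
        rw [div_pow, ← pow_mul]
        field_simp
        ring
    rw [ih] at hrec
    apply mul_left_cancel₀ (show (2 * j + 2 : ℝ) ≠ 0 by positivity)
    linear_combination hrec - (1 / 2 * log ((1 + l) / (1 - l))) * 2 * hcoeff
      - 1 / (2 * l) * hrat - hpow

lemma sum_negBinomCoeff_mul_moment (L l c r : ℝ) (N : ℕ) :
    ∑ j ∈ range (N + 1), negBinomCoeff (1 / 2) j * c ^ j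
        * (negBinomCoeff (1 / 2) j * L + 1 / (2 * l) * momentRationalPart r j)
      = L * ∑ j ∈ range (N + 1), (poch (1 / 2) j) ^ 2 / ((j ! : ℝ)) ^ 2 * c ^ j
        + 1 / (2 * l) * ∑ j ∈ Icc 1 N, ∑ n ∈ range j,
            (-1 : ℝ) ^ (j + n) * (poch (1 / 2) j * poch (1 / 2 - (j : ℝ)) n)
              / ((j : ℝ) * (j ! : ℝ) * poch (1 - (j : ℝ)) n) * c ^ j * r ^ (j - n) := by
  have hsq : ∀ j, negBinomCoeff (1 / 2) j ^ 2 = poch (1 / 2) j ^ 2 / (j ! : ℝ) ^ 2 := fun j => by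
    rw [negBinomCoeff, div_pow, mul_pow, ← pow_mul, pow_mul', neg_one_sq, one_pow, one_mul]
  have hrat : ∀ j, negBinomCoeff (1 / 2) j * c ^ j * momentRationalPart r j
      = ∑ n ∈ range j, (-1 : ℝ) ^ (j + n) * (poch (1 / 2) j * poch (1 / 2 - (j : ℝ)) n)
          / ((j : ℝ) * (j ! : ℝ) * poch (1 - (j : ℝ)) n) * c ^ j * r ^ (j - n) := fun j => by
    rw [momentRationalPart, mul_sum]
    refine sum_congr rfl fun n _ => ?_
    rw [negBinomCoeff, pow_add]
    ring
  have hIcc : ∑ j ∈ Icc 1 N, negBinomCoeff (1 / 2) j * c ^ j * momentRationalPart r j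
      = ∑ j ∈ range (N + 1), negBinomCoeff (1 / 2) j * c ^ j * momentRationalPart r j := by
    refine sum_subset (fun j hj => mem_range.2 (Nat.lt_succ_of_le (mem_Icc.1 hj).2))
      fun j hj hj' => ?_
    obtain rfl : j = 0 := by simp only [mem_range, mem_Icc] at hj hj'; omega
    simp [momentRationalPart]
  simp_rw [← hsq, ← hrat, hIcc, mul_sum, ← sum_add_distrib]
  refine sum_congr rfl fun j _ => ?_
  ring

end Moments

section EllipticIntegrand

variable {k : ℝ}

lemma abs_one_div_sqrt_sub_sum_le {t : ℝ} (hk : k ^ 2 ≤ 1) (ht : t ^ 2 < 1) (n : ℕ) :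
    |1 / √((1 - t ^ 2) * (1 - k ^ 2 * t ^ 2))
        - ∑ j ∈ range n, negBinomCoeff (1 / 2) j * (1 - k ^ 2) ^ j
            * (t ^ (2 * j) / (1 - t ^ 2) ^ (j + 1))|
      ≤ poch (1 / 2) n / n ! * (1 - k ^ 2) ^ n * (t ^ (2 * n) / (1 - t ^ 2) ^ (n + 1)) := by
  have hu : 0 < 1 - t ^ 2 := by linarith
  set x := (1 - k ^ 2) * t ^ 2 / (1 - t ^ 2) with hx
  have hx0 : 0 ≤ x := div_nonneg (mul_nonneg (by linarith) (sq_nonneg t)) hu.le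
  have hpow : ∀ j, (1 - k ^ 2) ^ j * (t ^ (2 * j) / (1 - t ^ 2) ^ (j + 1))
      = (1 - t ^ 2)⁻¹ * x ^ j := fun j => by
    rw [hx, div_pow, mul_pow, ← pow_mul]
    field_simp
    ring
  have hf : 1 / √((1 - t ^ 2) * (1 - k ^ 2 * t ^ 2))
      = (1 - t ^ 2)⁻¹ * (1 + x) ^ (-(1 / 2 : ℝ)) := by
    have hprod : (1 - t ^ 2) * (1 - k ^ 2 * t ^ 2) = (1 - t ^ 2) ^ 2 * (1 + x) := by
      rw [hx]
      field_simp
      ring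
    rw [hprod, sqrt_mul (sq_nonneg _), sqrt_sq hu.le, rpow_neg (by linarith), sqrt_eq_rpow,
      one_div, mul_inv]
  simp_rw [mul_assoc _ ((1 - k ^ 2) ^ _), hpow, hf, mul_left_comm _ (1 - t ^ 2)⁻¹, ← mul_sum,
    ← mul_sub, abs_mul, abs_of_pos (inv_pos.2 hu)]
  exact mul_le_mul_of_nonneg_left (abs_one_add_rpow_neg_sub_sum_le (by norm_num) n hx0)
    (inv_pos.2 hu).le

lemma abs_one_div_sqrt_sub_sum_le_of_mem_Ioc {l t : ℝ} (hk : k ^ 2 ≤ 1) (hl : l < 1)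
    (ht : t ∈ Set.Ioc 0 l) (N : ℕ) :
    |1 / √((1 - t ^ 2) * (1 - k ^ 2 * t ^ 2))
        - ∑ j ∈ range (N + 1), negBinomCoeff (1 / 2) j * (1 - k ^ 2) ^ j
            * (t ^ (2 * j) / (1 - t ^ 2) ^ (j + 1))|
      ≤ poch (1 / 2) (N + 1) / (N + 1)! * (1 - k ^ 2) ^ (N + 1) * l
          * (t ^ (2 * N + 1) / (1 - t ^ 2) ^ (N + 2)) := by
  have hpow : t ^ (2 * (N + 1)) ≤ l * t ^ (2 * N + 1) := by
    rw [show 2 * (N + 1) = 2 * N + 1 + 1 by ring, pow_succ']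
    exact mul_le_mul_of_nonneg_right ht.2 (pow_nonneg ht.1.le _)
  have hu : 0 < 1 - t ^ 2 := by nlinarith [ht.1, ht.2]
  have hpoch := poch_nonneg (a := 1 / 2) (by norm_num) (N + 1)
  have hc : 0 ≤ 1 - k ^ 2 := by linarith
  calc _ ≤ poch (1 / 2) (N + 1) / (N + 1)! * (1 - k ^ 2) ^ (N + 1)
        * (t ^ (2 * (N + 1)) / (1 - t ^ 2) ^ (N + 2)) :=
      abs_one_div_sqrt_sub_sum_le hk (by linarith) (N + 1)
    _ ≤ poch (1 / 2) (N + 1) / (N + 1)! * (1 - k ^ 2) ^ (N + 1)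
        * (l * t ^ (2 * N + 1) / (1 - t ^ 2) ^ (N + 2)) := by gcongr
    _ = _ := by ring

lemma integral_one_div_sqrt_sub_sum {l : ℝ} (hk : k ^ 2 ≤ 1) (hl : |l| < 1) (N : ℕ) :
    ∫ t in (0 : ℝ)..l, (1 / √((1 - t ^ 2) * (1 - k ^ 2 * t ^ 2))
        - ∑ j ∈ range (N + 1), negBinomCoeff (1 / 2) j * (1 - k ^ 2) ^ j
            * (t ^ (2 * j) / (1 - t ^ 2) ^ (j + 1)))
      = (∫ t in (0 : ℝ)..l, 1 / √((1 - t ^ 2) * (1 - k ^ 2 * t ^ 2)))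
        - 1 / 2 * log ((1 + l) / (1 - l))
          * ∑ j ∈ range (N + 1), (poch (1 / 2) j) ^ 2 / ((j ! : ℝ)) ^ 2 * (1 - k ^ 2) ^ j
        - 1 / (2 * l) * ∑ j ∈ Icc 1 N, ∑ n ∈ range j,
            (-1 : ℝ) ^ (j + n) * (poch (1 / 2) j * poch (1 / 2 - (j : ℝ)) n)
              / ((j : ℝ) * (j ! : ℝ) * poch (1 - (j : ℝ)) n)
              * (1 - k ^ 2) ^ j * (l ^ 2 / (1 - l ^ 2)) ^ (j - n) := by
  have hg : ∀ j ∈ range (N + 1), IntervalIntegrable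
      (fun t => negBinomCoeff (1 / 2) j * (1 - k ^ 2) ^ j * (t ^ (2 * j) / (1 - t ^ 2) ^ (j + 1)))
      MeasureTheory.volume 0 l :=
    fun j _ => (continuousOn_pow_div_one_sub_sq_pow hl _ _).intervalIntegrable.const_mul _
  have hf : IntervalIntegrable (fun t => 1 / √((1 - t ^ 2) * (1 - k ^ 2 * t ^ 2)))
      MeasureTheory.volume 0 l := by
    refine ContinuousOn.intervalIntegrable (continuousOn_const.div (by fun_prop) fun t ht => ?_)
    have := one_sub_sq_pos_of_mem_uIcc hl ht
    exact (sqrt_pos.2 (mul_pos this (by nlinarith))).ne'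
  rw [intervalIntegral.integral_sub hf (by simpa only [sum_fn] using IntervalIntegrable.sum _ hg),
    intervalIntegral.integral_finsetSum hg, sub_sub, ← sum_negBinomCoeff_mul_moment]
  congr 1
  refine sum_congr rfl fun j _ => ?_
  rw [intervalIntegral.integral_const_mul, integral_pow_div_one_sub_sq_pow hl]

end EllipticIntegrand

theorem stmt2_general (l k : ℝ) (hl0 : 0 < l) (hl1 : l < 1) (hk0 : 0 < k) (hk1 : k < 1) (N : ℕ) :
    |(∫ t in (0:ℝ)..l, 1 / Real.sqrt ((1 - t ^ 2) * (1 - k ^ 2 * t ^ 2)))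
      - (1/2) * Real.log ((1 + l) / (1 - l)) *
          ∑ j ∈ Finset.range (N + 1),
            (poch (1/2) j) ^ 2 / ((Nat.factorial j : ℝ)) ^ 2 * (1 - k ^ 2) ^ j
      - (1 / (2 * l)) *
          ∑ j ∈ Finset.Icc 1 N, ∑ n ∈ Finset.range j,
            (-1 : ℝ) ^ (j + n) *
              (poch (1/2) j * poch (1/2 - (j : ℝ)) n) /
                ((j : ℝ) * (Nat.factorial j : ℝ) * poch (1 - (j : ℝ)) n) *
              (1 - k ^ 2) ^ j * (l ^ 2 / (1 - l ^ 2)) ^ (j - n)|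
    ≤ l * poch (1/2) (N + 1) / (2 * ((N : ℝ) + 1) * (Nat.factorial (N + 1) : ℝ)) *
        (l ^ 2 * (1 - k ^ 2) / (1 - l ^ 2)) ^ (N + 1) := by
  have hl : |l| < 1 := by rwa [abs_of_pos hl0]
  have hk : k ^ 2 ≤ 1 := by nlinarith
  rw [← integral_one_div_sqrt_sub_sum hk hl N, ← Real.norm_eq_abs]
  refine (intervalIntegral.norm_integral_le_of_norm_le hl0.le (MeasureTheory.ae_of_all _
    fun _ ht => (Real.norm_eq_abs _).trans_le (abs_one_div_sqrt_sub_sum_le_of_mem_Ioc hk hl1 ht N))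
    ((continuousOn_pow_div_one_sub_sq_pow hl _ _).intervalIntegrable.const_mul _)).trans_eq ?_
  rw [intervalIntegral.integral_const_mul, integral_odd_pow_div_one_sub_sq_pow hl, div_pow,
    mul_pow, ← pow_mul]
  field_simp
  ring

theorem stmt2 (l k : ℝ) (hl0 : 0 < l) (hl1 : l < 1) (hk0 : 0 < k) (hk1 : k < 1)
    (hcond : 1 - k ^ 2 < (1 - l ^ 2) / l ^ 2) (N : ℕ) :
    |(∫ t in (0:ℝ)..l, 1 / Real.sqrt ((1 - t ^ 2) * (1 - k ^ 2 * t ^ 2)))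
      - (1/2) * Real.log ((1 + l) / (1 - l)) *
          ∑ j ∈ Finset.range (N + 1),
            (poch (1/2) j) ^ 2 / ((Nat.factorial j : ℝ)) ^ 2 * (1 - k ^ 2) ^ j
      - (1 / (2 * l)) *
          ∑ j ∈ Finset.Icc 1 N, ∑ n ∈ Finset.range j,
            (-1 : ℝ) ^ (j + n) *
              (poch (1/2) j * poch (1/2 - (j : ℝ)) n) /
                ((j : ℝ) * (Nat.factorial j : ℝ) * poch (1 - (j : ℝ)) n) *
              (1 - k ^ 2) ^ j * (l ^ 2 / (1 - l ^ 2)) ^ (j - n)|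
    ≤ l * poch (1/2) (N + 1) / (2 * ((N : ℝ) + 1) * (Nat.factorial (N + 1) : ℝ)) *
        (l ^ 2 * (1 - k ^ 2) / (1 - l ^ 2)) ^ (N + 1) :=
  stmt2_general l k hl0 hl1 hk0 hk1 N
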